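/- (Triangle rule for extreme points) Let E be an edge set on {1,…,n} containing all three edges {i,j}, {j,k}, {i,k} of a triangle, let ρ0 ∈ ℝ^n, and let ρ ∈ A(ρ0, E) satisfy ρ_i < ρ_j < ρ_k and ρ_i + ρ_k ≠ 2ρ_j. Then B_{ik}(ρ) is not an extreme point of the diffusion polytope DP(ρ0, E): it is a strict convex combination of two distinct points of DP(ρ0, E), namely the point obtained from ρ by replacing each of the components i, j, k by their average (ρ_i+ρ_j+ρ_k)/3, and (if ρ_i+ρ_k < 2ρ_j) the attainable point B_{ik}(B_{jk}(ρ)), respectively (if ρ_i+ρ_k > 2ρ_j) the attainable point B_{ik}(B_{ij}(ρ)). -/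

import Mathlib

/-- The averaging operator `B_{ij}` : averages the populations at vertices `i` and `j`,
leaving the other components unchanged. -/
noncomputable def avg {n : ℕ} (i j : Fin n) (ρ : Fin n → ℝ) : Fin n → ℝ :=
  fun k => if k = i ∨ k = j then (ρ i + ρ j) / 2 else ρ k

/-- The attainable set `A(ρ0, E)`: all vectors obtained from `ρ0` by applying a finite
sequence of operators `B_{ij}` with `{i,j} ∈ E` (and `i ≠ j`). -/
def attainable (n : ℕ) (E : Set (Sym2 (Fin n))) (ρ0 : Fin n → ℝ) : Set (Fin n → ℝ) :=
  {ρ | ∃ L : List (Fin n × Fin n),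
    (∀ p ∈ L, p.1 ≠ p.2 ∧ s(p.1, p.2) ∈ E) ∧
    ρ = L.foldl (fun σ p => avg p.1 p.2 σ) ρ0}

/-- The edge set of the path graph `P_n` (0-based: edges `{i, i+1}` for `i+1 < n`). -/
def pathEdges (n : ℕ) : Set (Sym2 (Fin n)) :=
  {e | ∃ i : ℕ, ∃ h : i + 1 < n, e = s(⟨i, Nat.lt_of_succ_lt h⟩, ⟨i + 1, h⟩)}

/-- Start of the block of index `j` determined by `A` (0-based: `i ∈ A` means indices
`i` and `i+1` lie in the same block): the least `a` with `[a, j) ⊆ A`. -/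
def blockStart (A : Finset ℕ) (j : ℕ) : ℕ :=
  Nat.findGreatest (fun a => a ≠ 0 ∧ (a - 1) ∉ A) j

/-- End of the block of index `j` determined by `A`: the greatest `b ≤ n - 1`
with `[j, b) ⊆ A`. -/
def blockEnd (n : ℕ) (A : Finset ℕ) (j : ℕ) : ℕ :=
  Nat.findGreatest (fun b => ∀ m ∈ Finset.Ico j b, m ∈ A) (n - 1)

/-- The point `S_A`: on each block of consecutive indices determined by `A`, its
components all equal the average of the components of `ρ0` over that block. -/
noncomputable def SA {n : ℕ} (ρ0 : Fin n → ℝ) (A : Finset ℕ) : Fin n → ℝ :=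
  fun j =>
    (∑ m ∈ Finset.Icc (blockStart A (j : ℕ)) (blockEnd n A (j : ℕ)),
        if h : m < n then ρ0 ⟨m, h⟩ else 0) /
      ((blockEnd n A (j : ℕ) - blockStart A (j : ℕ) + 1 : ℕ) : ℝ)

/-- Apply the adjacent averaging operator `B_{p,p+1}` (0-based) if it exists. -/
noncomputable def stepAt (n : ℕ) (p : ℕ) (ρ : Fin n → ℝ) : Fin n → ℝ :=
  if h : p + 1 < n then avg ⟨p, Nat.lt_of_succ_lt h⟩ ⟨p + 1, h⟩ ρ else ρ

/-!
One round `B_{ik} ∘ B_{jk} ∘ B_{ij}` of averaging along the triangle preserves the mean `s` of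
the three components and, from the first round on, leaves a deviation from `s` proportional to
`(1, -2, 1)` at `(i, j, k)`, which each further round multiplies by `-1/8`. Iterating therefore
drives an attainable point to the triple average, which thus lies in the diffusion polytope.
On the other hand, `B_{ik}(ρ)`, `B_{ik}(B_{jk}(ρ))` and the triple average all have
equal `i`- and `k`-components and the same sum over `i, j, k`, so they are collinear;
`B_{ik}(ρ)` lies strictly between the other two exactly when `ρ_j` lies strictly between
`(ρ_i + ρ_k)/2` and `ρ_k`.
The case `ρ_i + ρ_k > 2ρ_j` is the same statement with `i` and `k` exchanged.
-/

open Filter Topology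

lemma mem_openSegment_of_add_smul_eq {𝕜 E : Type*} [Field 𝕜] [LinearOrder 𝕜]
    [IsStrictOrderedRing 𝕜] [AddCommGroup E] [Module 𝕜 E] {x y z : E} {a b : 𝕜}
    (hab : 0 < a * b) (h : (a + b) • x = a • y + b • z) : x ∈ openSegment 𝕜 y z := by
  have hpos : ∀ a b : 𝕜, 0 < a → 0 < b → (a + b) • x = a • y + b • z →
      x ∈ openSegment 𝕜 y z := by
    intro a b ha hb h
    refine mem_openSegment_iff_div.2 ⟨a, b, ha, hb, ?_⟩
    rw [div_eq_inv_mul, div_eq_inv_mul, mul_smul, mul_smul, ← smul_add, ← h, inv_smul_smul₀]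
    positivity
  obtain ⟨ha, hb⟩ | ⟨ha, hb⟩ := pos_and_pos_or_neg_and_neg_of_mul_pos hab
  · exact hpos a b ha hb h
  · refine hpos (-a) (-b) (neg_pos.2 ha) (neg_pos.2 hb) ?_
    rw [← neg_add, neg_smul, neg_smul, neg_smul, h, neg_add]

lemma notMem_extremePoints_of_mem_openSegment {𝕜 E : Type*} [Field 𝕜] [LinearOrder 𝕜]
    [IsStrictOrderedRing 𝕜] [AddCommGroup E] [Module 𝕜 E] {A : Set E} {x y z : E}
    (hy : y ∈ A) (hz : z ∈ A) (hyz : y ≠ z) (hx : x ∈ openSegment 𝕜 y z) :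
    x ∉ A.extremePoints 𝕜 := fun hext =>
  let ⟨hyx, hzx⟩ := (mem_extremePoints.1 hext).2 y hy z hz hx
  hyz (hyx.trans hzx.symm)

section

variable {n : ℕ}

lemma avg_comm (i j : Fin n) : avg i j = avg j i := by
  funext ρ p
  simp only [avg, or_comm, add_comm]

lemma avg_apply_of_ne {i j p : Fin n} (hpi : p ≠ i) (hpj : p ≠ j) (ρ : Fin n → ℝ) :
    avg i j ρ p = ρ p := by
  simp [avg, hpi, hpj]

lemma avg_mem_attainable {E : Set (Sym2 (Fin n))} {ρ0 ρ : Fin n → ℝ}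
    (hρ : ρ ∈ attainable n E ρ0) {p q : Fin n} (hpq : p ≠ q) (hE : s(p, q) ∈ E) :
    avg p q ρ ∈ attainable n E ρ0 := by
  obtain ⟨L, hL, rfl⟩ := hρ
  refine ⟨L ++ [(p, q)], ?_, by simp [List.foldl_append]⟩
  simp only [List.mem_append, List.mem_singleton]
  rintro x (hx | rfl)
  exacts [hL x hx, ⟨hpq, hE⟩]

noncomputable def avg3 (i j k : Fin n) (ρ : Fin n → ℝ) : Fin n → ℝ :=
  fun m => if m = i ∨ m = j ∨ m = k then (ρ i + ρ j + ρ k) / 3 else ρ m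

lemma avg3_swap (i j k : Fin n) : avg3 k j i = avg3 i j k := by
  funext ρ p
  simp only [avg3]
  congr 1
  · exact propext (by tauto)
  · ring

noncomputable def avgRound (i j k : Fin n) (ρ : Fin n → ℝ) : Fin n → ℝ :=
  avg i k (avg j k (avg i j ρ))

def roundEigvec (i j k : Fin n) : Fin n → ℝ :=
  fun m => if m = j then -2 else if m = i ∨ m = k then 1 else 0

variable {i j k : Fin n}

lemma avgRound_eq (hij : i ≠ j) (hjk : j ≠ k) (hik : i ≠ k) (ρ : Fin n → ℝ) :
    avgRound i j k ρ = avg3 i j k ρ + ((ρ i + ρ j - 2 * ρ k) / 24) • roundEigvec i j k := by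
  funext p
  have := hij.symm; have := hjk.symm; have := hik.symm
  by_cases hpj : p = j <;> by_cases hpi : p = i <;> by_cases hpk : p = k <;>
    simp_all [avgRound, avg, avg3, roundEigvec] <;> ring

lemma avgRound_avg3_add_smul (hij : i ≠ j) (hjk : j ≠ k) (hik : i ≠ k) (ρ : Fin n → ℝ)
    (x : ℝ) :
    avgRound i j k (avg3 i j k ρ + x • roundEigvec i j k) =
      avg3 i j k ρ + (-x / 8) • roundEigvec i j k := by
  funext p
  have := hij.symm; have := hjk.symm; have := hik.symm
  by_cases hpj : p = j <;> by_cases hpi : p = i <;> by_cases hpk : p = k <;>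
    simp_all [avgRound, avg, avg3, roundEigvec] <;> ring

lemma avgRound_iterate_avg3_add_smul (hij : i ≠ j) (hjk : j ≠ k) (hik : i ≠ k)
    (ρ : Fin n → ℝ) (x : ℝ) (m : ℕ) :
    (avgRound i j k)^[m] (avg3 i j k ρ + x • roundEigvec i j k) =
      avg3 i j k ρ + ((-1 / 8) ^ m * x) • roundEigvec i j k := by
  induction m with
  | zero => simp
  | succ m ih =>
    rw [Function.iterate_succ_apply', ih, avgRound_avg3_add_smul hij hjk hik]
    ring_nf

lemma tendsto_avgRound_iterate (hij : i ≠ j) (hjk : j ≠ k) (hik : i ≠ k)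
    (ρ : Fin n → ℝ) :
    Tendsto (fun m => (avgRound i j k)^[m] ρ) atTop (𝓝 (avg3 i j k ρ)) := by
  rw [← tendsto_add_atTop_iff_nat 1]
  have hgeom : Tendsto (fun m : ℕ => (-1 / 8 : ℝ) ^ m) atTop (𝓝 0) :=
    tendsto_pow_atTop_nhds_zero_of_abs_lt_one (by norm_num [abs_div])
  have hlim := ((hgeom.mul_const ((ρ i + ρ j - 2 * ρ k) / 24)).smul_const
    (roundEigvec i j k)).const_add (avg3 i j k ρ)
  simp only [zero_mul, zero_smul, add_zero] at hlim
  simpa only [Function.iterate_succ_apply, avgRound_eq hij hjk hik,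
    avgRound_iterate_avg3_add_smul hij hjk hik] using hlim

lemma avg3_mem_closure_attainable {E : Set (Sym2 (Fin n))} {ρ0 ρ : Fin n → ℝ}
    (hij : i ≠ j) (hjk : j ≠ k) (hik : i ≠ k)
    (hEij : s(i, j) ∈ E) (hEjk : s(j, k) ∈ E) (hEik : s(i, k) ∈ E)
    (hρ : ρ ∈ attainable n E ρ0) :
    avg3 i j k ρ ∈ closure (attainable n E ρ0) := by
  have hmem : ∀ m, (avgRound i j k)^[m] ρ ∈ attainable n E ρ0 := by
    intro m
    induction m with
    | zero => exact hρ
    | succ m ih =>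
      rw [Function.iterate_succ_apply']
      exact avg_mem_attainable (avg_mem_attainable (avg_mem_attainable ih hij hEij)
        hjk hEjk) hik hEik
  exact mem_closure_of_tendsto (tendsto_avgRound_iterate hij hjk hik ρ)
    (Eventually.of_forall hmem)

lemma avg_mem_openSegment_avg3 (hij : i ≠ j) (hjk : j ≠ k) (hik : i ≠ k) {ρ : Fin n → ℝ}
    (hρ : 0 < (ρ k - ρ j) * (2 * ρ j - ρ i - ρ k)) :
    avg i k ρ ∈ openSegment ℝ (avg3 i j k ρ) (avg i k (avg j k ρ)) := by
  refine mem_openSegment_of_add_smul_eq (a := 3 * (ρ k - ρ j))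
    (b := 2 * (2 * ρ j - ρ i - ρ k)) (by nlinarith) ?_
  funext p
  have := hij.symm; have := hjk.symm; have := hik.symm
  by_cases hpj : p = j <;> by_cases hpi : p = i <;> by_cases hpk : p = k <;>
    simp_all [avg, avg3] <;> ring

end

/-- Triangle rule for extreme points: if the edge set contains all three edges of a
triangle `{i,j}, {j,k}, {i,k}`, and `ρ` is attainable with `ρ_i < ρ_j < ρ_k` and
`ρ_i + ρ_k ≠ 2ρ_j`, then `B_{ik}(ρ)` is not an extreme point of the diffusion polytope:
it is a strict convex combination of two distinct points of the polytope, namely the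
point obtained by averaging the three components `i, j, k` of `ρ` and (according to the
sign of `ρ_i + ρ_k − 2ρ_j`) the attainable point `B_{ik}(B_{jk}(ρ))` or
`B_{ik}(B_{ij}(ρ))`. -/
theorem triangle_rule (n : ℕ) (E : Set (Sym2 (Fin n))) (ρ0 : Fin n → ℝ)
    (i j k : Fin n) (hij : i ≠ j) (hjk : j ≠ k) (hik : i ≠ k)
    (hEij : s(i, j) ∈ E) (hEjk : s(j, k) ∈ E) (hEik : s(i, k) ∈ E)
    (ρ : Fin n → ℝ) (hρ : ρ ∈ attainable n E ρ0)
    (h1 : ρ i < ρ j) (h2 : ρ j < ρ k) (h3 : ρ i + ρ k ≠ 2 * ρ j) :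
    avg i k ρ ∉
      Set.extremePoints ℝ (closure (convexHull ℝ (attainable n E ρ0))) ∧
    ∃ lam : ℝ, 0 < lam ∧ lam < 1 ∧
      (fun m => if m = i ∨ m = j ∨ m = k then (ρ i + ρ j + ρ k) / 3 else ρ m) ∈
        closure (convexHull ℝ (attainable n E ρ0)) ∧
      (if ρ i + ρ k < 2 * ρ j then avg i k (avg j k ρ) else avg i k (avg i j ρ)) ∈
        attainable n E ρ0 ∧
      (fun m => if m = i ∨ m = j ∨ m = k then (ρ i + ρ j + ρ k) / 3 else ρ m) ≠
        (if ρ i + ρ k < 2 * ρ j then avg i k (avg j k ρ) else avg i k (avg i j ρ)) ∧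
      avg i k ρ =
        lam • (fun m => if m = i ∨ m = j ∨ m = k then (ρ i + ρ j + ρ k) / 3 else ρ m) +
        (1 - lam) •
          (if ρ i + ρ k < 2 * ρ j then avg i k (avg j k ρ) else avg i k (avg i j ρ)) := by
  set C := closure (convexHull ℝ (attainable n E ρ0))
  set P := avg3 i j k ρ
  set q := if ρ i + ρ k < 2 * ρ j then avg i k (avg j k ρ) else avg i k (avg i j ρ)
  have hP : P ∈ C := closure_mono (subset_convexHull ℝ _)
    (avg3_mem_closure_attainable hij hjk hik hEij hEjk hEik hρ)
  obtain ⟨hq, hseg⟩ : q ∈ attainable n E ρ0 ∧ avg i k ρ ∈ openSegment ℝ P q := by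
    dsimp only [q]
    split_ifs with hc
    · exact ⟨avg_mem_attainable (avg_mem_attainable hρ hjk hEjk) hik hEik,
        avg_mem_openSegment_avg3 hij hjk hik (mul_pos (by linarith) (by linarith))⟩
    · refine ⟨avg_mem_attainable (avg_mem_attainable hρ hij hEij) hik hEik, ?_⟩
      have := avg_mem_openSegment_avg3 hjk.symm hij.symm hik.symm (ρ := ρ)
        (mul_pos_of_neg_of_neg (by linarith) (by linarith [lt_of_le_of_ne (not_lt.1 hc) h3.symm]))
      rwa [avg_comm k i, avg_comm j i, avg3_swap] at this
  have hne : P ≠ q := by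
    rintro hPq
    rw [← hPq, openSegment_same, Set.mem_singleton_iff] at hseg
    have := congrFun hseg j
    simp only [avg_apply_of_ne hij.symm hjk, P, avg3, true_or, or_true, if_true] at this
    exact h3 (by linarith)
  obtain ⟨lam, mu, hlam, hmu, hsum, hcomb⟩ := id hseg
  obtain rfl : mu = 1 - lam := by linarith
  refine ⟨notMem_extremePoints_of_mem_openSegment hP
    (subset_closure (subset_convexHull ℝ _ hq)) hne hseg,
    lam, hlam, by linarith, hP, hq, hne, hcomb.symm⟩
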